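/- Let V be a set of variables and φ = (C_1, …, C_m) a list of m clauses over V, each consisting of exactly four literals, say C_i = (l_1^i, l_2^i, l_3^i, l_4^i). Introduce m fresh variables z_1, …, z_m and let φ' be the list of 2m three-literal clauses over V ⊎ {z_1,…,z_m} consisting, for each i, of C'_i = (l_1^i, l_2^i, (z_i, true)) and C''_i = (l_3^i, l_4^i, (z_i, false)). Then for every natural number k: there exists an assignment NAE-satisfying at least k clauses of φ if and only if there exists an assignment NAE-satisfying at least m + k clauses of φ'. -/
import Mathlib


open Finset

/-- A literal over the variable set `V`: a variable together with a polarity. -/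
abbrev Lit (V : Type*) := V × Bool

/-- The assignment `σ` satisfies the literal `l`. -/
def satLit {V : Type*} (σ : V → Bool) (l : Lit V) : Bool := σ l.1 == l.2

/-- The assignment `σ` NAE-satisfies the 3-clause `c` (it contains both a satisfied and an
unsatisfied literal). -/
def nae3 {V : Type*} (σ : V → Bool) (c : Lit V × Lit V × Lit V) : Bool :=
  (satLit σ c.1 || satLit σ c.2.1 || satLit σ c.2.2) &&
  (!satLit σ c.1 || !satLit σ c.2.1 || !satLit σ c.2.2)

/-- The assignment `σ` NAE-satisfies the 4-clause `c` (it contains both a satisfied and an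
unsatisfied literal). -/
def nae4 {V : Type*} (σ : V → Bool) (c : Lit V × Lit V × Lit V × Lit V) : Bool :=
  (satLit σ c.1 || satLit σ c.2.1 || satLit σ c.2.2.1 || satLit σ c.2.2.2) &&
  (!satLit σ c.1 || !satLit σ c.2.1 || !satLit σ c.2.2.1 || !satLit σ c.2.2.2)

/-- Reinterpret a literal over `V` as a literal over `V ⊕ Fin m`. -/
def liftLit {V : Type*} {m : ℕ} (l : Lit V) : Lit (V ⊕ Fin m) := (Sum.inl l.1, l.2)

/-- The splitting of the family `φ` of 4-clauses into `2m` 3-clauses: the clause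
`C_i = (l₁, l₂, l₃, l₄)` is replaced by `C'_i = (l₁, l₂, z_i)` and
`C''_i = (l₃, l₄, ¬ z_i)`, where `z_i` is a fresh variable. -/
def splitClause {V : Type*} {m : ℕ} (φ : Fin m → Lit V × Lit V × Lit V × Lit V) :
    Fin m × Bool → Lit (V ⊕ Fin m) × Lit (V ⊕ Fin m) × Lit (V ⊕ Fin m) := fun p =>
  if p.2 then
    (liftLit (φ p.1).1, liftLit (φ p.1).2.1, ((Sum.inr p.1 : V ⊕ Fin m), true))
  else
    (liftLit (φ p.1).2.2.1, liftLit (φ p.1).2.2.2, ((Sum.inr p.1 : V ⊕ Fin m), false))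

section Aux

lemma boolkey_le (s1 s2 s3 s4 z : Bool) :
    ((if ((s1 || s2 || (z == true)) && (!s1 || !s2 || !(z == true))) = true then 1 else 0)
    + (if ((s3 || s4 || (z == false)) && (!s3 || !s4 || !(z == false))) = true then 1 else 0) : ℕ)
    ≤ 1 + (if ((s1 || s2 || s3 || s4) && (!s1 || !s2 || !s3 || !s4)) = true then 1 else 0) := by
  revert s1 s2 s3 s4 z
  decide

lemma boolkey_ge (s1 s2 s3 s4 : Bool) :
    1 + (if ((s1 || s2 || s3 || s4) && (!s1 || !s2 || !s3 || !s4)) = true then 1 else 0)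
    ≤ ((if ((s1 || s2 || (cond (s1 == s2) (!s1) s3 == true))
          && (!s1 || !s2 || !(cond (s1 == s2) (!s1) s3 == true))) = true then 1 else 0)
    + (if ((s3 || s4 || (cond (s1 == s2) (!s1) s3 == false))
          && (!s3 || !s4 || !(cond (s1 == s2) (!s1) s3 == false))) = true then 1 else 0) : ℕ) := by
  revert s1 s2 s3 s4
  decide

end Aux

lemma count3_eq {V : Type*} {m : ℕ} (φ : Fin m → Lit V × Lit V × Lit V × Lit V)
    (τ : V ⊕ Fin m → Bool) :
    (Finset.univ.filter fun p : Fin m × Bool => nae3 τ (splitClause φ p) = true).card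
    = ∑ i : Fin m, ((if nae3 τ (splitClause φ (i, true)) = true then 1 else 0)
        + (if nae3 τ (splitClause φ (i, false)) = true then 1 else 0)) := by
  rw [Finset.card_filter, Fintype.sum_prod_type]
  refine Finset.sum_congr rfl fun i _ => ?_
  exact Fintype.sum_bool _

lemma count4_eq {V : Type*} {m : ℕ} (φ : Fin m → Lit V × Lit V × Lit V × Lit V)
    (σ : V → Bool) :
    (Finset.univ.filter fun i : Fin m => nae4 σ (φ i) = true).card
    = ∑ i : Fin m, (if nae4 σ (φ i) = true then 1 else 0) := by
  rw [Finset.card_filter]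

lemma per_i_le {V : Type*} {m : ℕ} (φ : Fin m → Lit V × Lit V × Lit V × Lit V)
    (τ : V ⊕ Fin m → Bool) (i : Fin m) :
    ((if nae3 τ (splitClause φ (i, true)) = true then 1 else 0)
    + (if nae3 τ (splitClause φ (i, false)) = true then 1 else 0) : ℕ)
    ≤ 1 + (if nae4 (fun v => τ (Sum.inl v)) (φ i) = true then 1 else 0) := by
  simp only [nae3, nae4, splitClause, liftLit, satLit, if_true, if_false]
  exact boolkey_le _ _ _ _ _

/-- Splitting every 4-clause of `φ` into two 3-clauses using a fresh variable per clause: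
for every `k`, some assignment NAE-satisfies at least `k` clauses of `φ` iff some
assignment NAE-satisfies at least `m + k` of the `2m` clauses of the new formula. -/
theorem gap_e4naesat_to_gap_e3naesat {V : Type*} {m : ℕ}
    (φ : Fin m → Lit V × Lit V × Lit V × Lit V) (k : ℕ) :
    (∃ σ : V → Bool,
      k ≤ (Finset.univ.filter fun i : Fin m => nae4 σ (φ i) = true).card) ↔
    (∃ τ : V ⊕ Fin m → Bool,
      m + k ≤ (Finset.univ.filter fun p : Fin m × Bool =>
        nae3 τ (splitClause φ p) = true).card) := by
  constructor
  · rintro ⟨σ, hk⟩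
    set z : Fin m → Bool := fun i =>
      cond (satLit σ (φ i).1 == satLit σ (φ i).2.1) (!(satLit σ (φ i).1)) (satLit σ (φ i).2.2.1)
      with hz
    refine ⟨Sum.elim σ z, ?_⟩
    have hge : ∀ i : Fin m,
        1 + (if nae4 σ (φ i) = true then 1 else 0)
        ≤ ((if nae3 (Sum.elim σ z) (splitClause φ (i, true)) = true then 1 else 0)
        + (if nae3 (Sum.elim σ z) (splitClause φ (i, false)) = true then 1 else 0) : ℕ) := by
      intro i
      simp only [nae3, nae4, splitClause, liftLit, satLit, if_true, if_false, Sum.elim_inl,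
        Sum.elim_inr, hz]
      exact boolkey_ge _ _ _ _
    calc m + k ≤ m + (Finset.univ.filter fun i : Fin m => nae4 σ (φ i) = true).card :=
          Nat.add_le_add_left hk m
      _ = ∑ i : Fin m, (1 + (if nae4 σ (φ i) = true then 1 else 0)) := by
          rw [Finset.sum_add_distrib, count4_eq]
          simp
      _ ≤ _ := by
          rw [count3_eq]
          exact Finset.sum_le_sum fun i _ => hge i
  · rintro ⟨τ, hk⟩
    refine ⟨fun v => τ (Sum.inl v), ?_⟩
    have h : m + k ≤ m + (Finset.univ.filter fun i : Fin m =>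
        nae4 (fun v => τ (Sum.inl v)) (φ i) = true).card := by
      calc m + k ≤ (Finset.univ.filter fun p : Fin m × Bool =>
            nae3 τ (splitClause φ p) = true).card := hk
        _ ≤ ∑ i : Fin m, (1 + (if nae4 (fun v => τ (Sum.inl v)) (φ i) = true then 1 else 0)) := by
            rw [count3_eq]
            exact Finset.sum_le_sum fun i _ => per_i_le φ τ i
        _ = _ := by rw [Finset.sum_add_distrib, count4_eq]; simp
    exact Nat.le_of_add_le_add_left h
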